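/- arXiv:1806.10365 — 2 statements merged into one kernel-verified Lean document; each statement's English description precedes it below -/
import Mathlib

section
/- If p ∈ βX \ υX, then υ_{C_p}X = υX ∪ {p}; that is, the set of points q ∈ βX at which every function of C_p extends real-valuedly is exactly the Hewitt realcompactification together with the single point p. -/
open Filter Topology

variable {X : Type*} [TopologicalSpace X]

/-- The continuous extension `f* : βX → ℝ ∪ {∞}` of `f ∈ C(X)` to the Stone–Čech
compactification, with values in the one-point compactification of `ℝ`. -/
noncomputable def fstar (f : C(X, ℝ)) : StoneCech X → OnePoint ℝ :=
  stoneCechExtend (OnePoint.continuous_coe.comp f.continuous)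

/-- The set `C_p = {f ∈ C(X) : f*(p) ∈ ℝ}`. -/
def Cp (p : StoneCech X) : Set C(X, ℝ) :=
  {f : C(X, ℝ) | ∃ r : ℝ, fstar f p = (r : OnePoint ℝ)}

/-- The Hewitt realcompactification `υX`, viewed as the set of points of `βX` at which
every `f ∈ C(X)` has a real value. -/
def upsilon (X : Type*) [TopologicalSpace X] : Set (StoneCech X) :=
  {p | ∀ f : C(X, ℝ), ∃ r : ℝ, fstar f p = (r : OnePoint ℝ)}

/-- For a subset `A ⊆ C(X)`, the set `υ_A X` of points of `βX` at which each `f ∈ A` has a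
real value. -/
def upsilonA (X : Type*) [TopologicalSpace X] (A : Set C(X, ℝ)) : Set (StoneCech X) :=
  {p | ∀ f ∈ A, ∃ r : ℝ, fstar f p = (r : OnePoint ℝ)}

/-! If `q ∉ υX ∪ {p}`, pick `g ∈ C(X)` with `g*(q) = ∞`, and an Urysohn function `k` on `βX`
that vanishes on a neighbourhood of `p` and equals `1` at `q`. Then `f = g · (k ∘ ι)` vanishes
near `p`, so `f ∈ C_p`, while `|f| ≥ |g| / 2` near `q`, so `f*(q) = ∞` and `q ∉ υ_{C_p} X`. -/

open scoped OnePoint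

def traceNhds (q : StoneCech X) : Filter X := comap stoneCechUnit (𝓝 q)

instance traceNhds_neBot (q : StoneCech X) : (traceNhds q).NeBot :=
  comap_neBot fun _ ht => denseRange_stoneCechUnit.mem_nhds ht

lemma tendsto_traceNhds {Y : Type*} [TopologicalSpace Y] {k : StoneCech X → Y}
    {q : StoneCech X} (hk : ContinuousAt k q) :
    Tendsto (k ∘ stoneCechUnit) (traceNhds q) (𝓝 (k q)) :=
  hk.tendsto.comp tendsto_comap

lemma tendsto_traceNhds_fstar (f : C(X, ℝ)) (q : StoneCech X) :
    Tendsto (fun x => (f x : OnePoint ℝ)) (traceNhds q) (𝓝 (fstar f q)) := by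
  have h := tendsto_traceNhds (continuous_stoneCechExtend
    (OnePoint.continuous_coe.comp f.continuous)).continuousAt (q := q)
  rwa [stoneCechExtend_extends] at h

lemma fstar_eq_of_tendsto {f : C(X, ℝ)} {q : StoneCech X} {y : OnePoint ℝ}
    (h : Tendsto (fun x => (f x : OnePoint ℝ)) (traceNhds q) (𝓝 y)) : fstar f q = y :=
  tendsto_nhds_unique (tendsto_traceNhds_fstar f q) h

lemma fstar_eq_of_eventuallyEq {f : C(X, ℝ)} {q : StoneCech X} {r : ℝ}
    (h : ∀ᶠ x in traceNhds q, f x = r) : fstar f q = r :=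
  fstar_eq_of_tendsto <| tendsto_const_nhds.congr' <| h.mono fun _ hx => congrArg _ hx.symm

lemma fstar_eq_infty_iff {f : C(X, ℝ)} {q : StoneCech X} :
    fstar f q = ∞ ↔ Tendsto (fun x => |f x|) (traceNhds q) atTop := by
  simp only [← Real.norm_eq_abs, tendsto_norm_atTop_iff_cobounded, Metric.cobounded_eq_cocompact,
    ← coclosedCompact_eq_cocompact, ← OnePoint.comap_coe_nhds_infty, tendsto_comap_iff]
  exact ⟨fun h => h ▸ tendsto_traceNhds_fstar f q, fstar_eq_of_tendsto⟩

lemma exists_fstar_eq_infty_of_notMem_upsilon {q : StoneCech X} (hq : q ∉ upsilon X) :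
    ∃ g : C(X, ℝ), fstar g q = ∞ := by
  obtain ⟨g, hg⟩ := not_forall.1 hq
  exact ⟨g, OnePoint.notMem_range_coe_iff.1 fun ⟨r, hr⟩ => hg ⟨r, hr.symm⟩⟩

lemma exists_mem_Cp_fstar_eq_infty {p q : StoneCech X} {g : C(X, ℝ)} (hpq : q ≠ p)
    (hg : fstar g q = ∞) : ∃ f ∈ Cp p, fstar f q = ∞ := by
  obtain ⟨N, hNp, hN, hqN⟩ := exists_mem_nhds_isClosed_subset (isOpen_ne.mem_nhds hpq.symm)
  obtain ⟨k, hk0, hk1, -⟩ := exists_continuous_zero_one_of_isClosed hN isClosed_singleton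
    (Set.disjoint_singleton_right.2 fun hq => hqN hq rfl)
  set kX : C(X, ℝ) := k.comp ⟨stoneCechUnit, continuous_stoneCechUnit⟩
  refine ⟨g * kX, ⟨0, fstar_eq_of_eventuallyEq ?_⟩, fstar_eq_infty_iff.2 ?_⟩
  · filter_upwards [preimage_mem_comap hNp] with x hx
    simp [kX, hk0 hx]
  · have hkq : Tendsto (fun x => |kX x|) (traceNhds q) (𝓝 1) := by
      have hkq1 : k q = 1 := hk1 rfl
      have h := (tendsto_traceNhds (q := q) k.continuous.continuousAt).abs
      rwa [hkq1, abs_one] at h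
    simpa only [ContinuousMap.mul_apply, abs_mul] using
      (fstar_eq_infty_iff.1 hg).atTop_mul_pos one_pos hkq

theorem statement2_general (p : StoneCech X) :
    upsilonA X (Cp p) = upsilon X ∪ {p} := by
  refine Set.Subset.antisymm (fun q hq => ?_) ?_
  · by_contra hq'
    rw [Set.mem_union, Set.mem_singleton_iff, not_or] at hq'
    obtain ⟨g, hg⟩ := exists_fstar_eq_infty_of_notMem_upsilon hq'.1
    obtain ⟨f, hfp, hfq⟩ := exists_mem_Cp_fstar_eq_infty hq'.2 hg
    obtain ⟨r, hr⟩ := hq f hfp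
    exact OnePoint.coe_ne_infty r (hr.symm.trans hfq)
  · rintro q (hq | rfl)
    · exact fun f _ => hq f
    · exact fun f hf => hf

/-- If `p ∈ βX \ υX`, then `υ_{C_p} X = υX ∪ {p}`. -/
theorem statement2 [T2Space X] [CompletelyRegularSpace X] (p : StoneCech X)
    (hp : p ∉ upsilon X) :
    upsilonA X (Cp p) = upsilon X ∪ {p} :=
  statement2_general p
end

section
/- If X is a completely regular Hausdorff space that is not pseudocompact (i.e., C*(X) ⊊ C(X)), then the family Σ(X) of all intermediate rings between C*(X) and C(X) contains at least 2^c = 2^{2^{ℵ₀}} distinct members; indeed the map p ↦ C_p is injective on βX \ υX, which has cardinality at least 2^c. -/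
/-!
For `p ≠ q` in `βX` with `f*(q) = ∞`, a Urysohn function `g` on `βX` vanishing near `p` and equal
to `1` near `q` gives `f · g ∈ C_p \ C_q`; so `p ↦ C_p` is injective on `βX \ υX`, and it lands
in `Σ(X)` since each `C_p` is a ring containing `C*(X)`.

An unbounded `f` yields a sequence `xₙ` with `|f(xₙ)| → ∞` and `1`-separated values, so every
indicator function on `ℕ` factors through `|f|` as a continuous function on `X`. Hence distinct
ultrafilters on `ℕ` have distinct limits in `βX`, and free ones have limits outside `υX`. The cuts
of finite sets of rationals give an independent family of `𝔠` subsets of a countable set, hence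
`2^𝔠` free ultrafilters on `ℕ`.
-/

open Filter Topology

variable {X : Type*} [TopologicalSpace X]

namespace StoneCech

def traceNhds (p : StoneCech X) : Filter X := comap stoneCechUnit (𝓝 p)

instance traceNhds_neBot (p : StoneCech X) : p.traceNhds.NeBot :=
  comap_neBot fun _ => denseRange_stoneCechUnit.mem_nhds

end StoneCech

theorem tendsto_fstar_of_tendsto {ι : Type*} {l : Filter ι} {y : ι → X} {q : StoneCech X}
    (hy : Tendsto (stoneCechUnit ∘ y) l (𝓝 q)) (f : C(X, ℝ)) :
    Tendsto (fun i => (f (y i) : OnePoint ℝ)) l (𝓝 (fstar f q)) := by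
  have hf := OnePoint.continuous_coe.comp f.continuous
  simpa [fstar, Function.comp_def, ← congrFun (stoneCechExtend_extends hf)] using
    ((continuous_stoneCechExtend hf).tendsto q).comp hy

theorem tendsto_fstar_traceNhds (f : C(X, ℝ)) (p : StoneCech X) :
    Tendsto (fun x => (f x : OnePoint ℝ)) p.traceNhds (𝓝 (fstar f p)) :=
  tendsto_fstar_of_tendsto (y := id) tendsto_comap f

theorem fstar_eq_coe_iff {f : C(X, ℝ)} {p : StoneCech X} {r : ℝ} :
    fstar f p = r ↔ Tendsto f p.traceNhds (𝓝 r) := by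
  have hlim := tendsto_fstar_traceNhds f p
  refine ⟨fun h => ?_, fun h => tendsto_nhds_unique hlim ?_⟩
  · rw [h] at hlim
    exact OnePoint.isOpenEmbedding_coe.tendsto_nhds_iff.2 hlim
  · exact (OnePoint.continuous_coe.tendsto r).comp h

theorem mem_Cp_iff {f : C(X, ℝ)} {p : StoneCech X} :
    f ∈ Cp p ↔ ∃ r : ℝ, Tendsto f p.traceNhds (𝓝 r) := by
  simp only [Cp, Set.mem_ofPred_eq, fstar_eq_coe_iff]

theorem mem_Cp_congr {f g : C(X, ℝ)} {p : StoneCech X} (h : f =ᶠ[p.traceNhds] g) :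
    f ∈ Cp p ↔ g ∈ Cp p := by
  simp only [mem_Cp_iff, tendsto_congr' h]

theorem mem_Cp_of_eventually_abs_le {f : C(X, ℝ)} {p : StoneCech X} {M : ℝ}
    (h : ∀ᶠ x in p.traceNhds, |f x| ≤ M) : f ∈ Cp p := by
  have hK : IsClosed (((↑) : ℝ → OnePoint ℝ) '' Set.Icc (-M) M) :=
    (isCompact_Icc.image OnePoint.continuous_coe).isClosed
  obtain ⟨r, -, hr⟩ := hK.mem_of_tendsto (tendsto_fstar_traceNhds f p)
    (h.mono fun x hx => Set.mem_image_of_mem _ (abs_le.1 hx))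
  exact ⟨r, hr.symm⟩

def subringCp (p : StoneCech X) : Subring C(X, ℝ) where
  carrier := Cp p
  zero_mem' := mem_Cp_iff.2 ⟨0, tendsto_const_nhds⟩
  one_mem' := mem_Cp_iff.2 ⟨1, tendsto_const_nhds⟩
  add_mem' := by
    rintro f g hf hg
    obtain ⟨⟨r, hr⟩, ⟨s, hs⟩⟩ := And.intro (mem_Cp_iff.1 hf) (mem_Cp_iff.1 hg)
    exact mem_Cp_iff.2 ⟨r + s, hr.add hs⟩
  mul_mem' := by
    rintro f g hf hg
    obtain ⟨⟨r, hr⟩, ⟨s, hs⟩⟩ := And.intro (mem_Cp_iff.1 hf) (mem_Cp_iff.1 hg)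
    exact mem_Cp_iff.2 ⟨r * s, hr.mul hs⟩
  neg_mem' := by
    rintro f hf
    obtain ⟨r, hr⟩ := mem_Cp_iff.1 hf
    exact mem_Cp_iff.2 ⟨-r, hr.neg⟩

theorem exists_continuous_eventuallyEq_zero_one {Y : Type*} [TopologicalSpace Y] [T4Space Y]
    {p q : Y} (hpq : p ≠ q) : ∃ g : C(Y, ℝ), g =ᶠ[𝓝 p] 0 ∧ g =ᶠ[𝓝 q] 1 := by
  obtain ⟨U, V, hU, hV, hpU, hqV, hUV⟩ := t2_separation hpq
  obtain ⟨s, hs, hsc, hsU⟩ := exists_mem_nhds_isClosed_subset (hU.mem_nhds hpU)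
  obtain ⟨t, ht, htc, htV⟩ := exists_mem_nhds_isClosed_subset (hV.mem_nhds hqV)
  obtain ⟨g, hg0, hg1, -⟩ := exists_continuous_zero_one_of_isClosed hsc htc (hUV.mono hsU htV)
  exact ⟨g, mem_of_superset hs hg0, mem_of_superset ht hg1⟩

theorem not_subset_Cp_of_notMem_upsilon {p q : StoneCech X} (hpq : p ≠ q)
    (hq : q ∉ upsilon X) : ¬ Cp p ⊆ Cp q := by
  obtain ⟨f, hf⟩ : ∃ f : C(X, ℝ), f ∉ Cp q := by simpa [upsilon, Cp] using hq
  obtain ⟨g, hgp, hgq⟩ := exists_continuous_eventuallyEq_zero_one hpq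
  let h : C(X, ℝ) := f * g.comp ⟨stoneCechUnit, continuous_stoneCechUnit⟩
  have hhp : h =ᶠ[p.traceNhds] 0 := (tendsto_comap.eventually hgp).mono fun x hx => by
    simp [h, hx]
  have hhq : h =ᶠ[q.traceNhds] f := (tendsto_comap.eventually hgq).mono fun x hx => by
    simp [h, hx]
  exact fun hsub => hf <| (mem_Cp_congr hhq).1 <| hsub <|
    (mem_Cp_congr hhp).2 (subringCp p).zero_mem

theorem injOn_Cp : Set.InjOn (fun p : StoneCech X => Cp p) (upsilon X)ᶜ := by
  intro p _ q hq hpq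
  by_contra hne
  exact not_subset_Cp_of_notMem_upsilon hne hq hpq.subset

theorem exists_seq_abs_add_one_le {α : Type*} {f : α → ℝ} (hf : ¬ ∃ M : ℝ, ∀ x, |f x| ≤ M) :
    ∃ x : ℕ → α, ∀ m n, m < n → |f (x m)| + 1 ≤ |f (x n)| := by
  obtain ⟨x, -, hx⟩ := exists_seq_of_forall_finset_exists (fun _ => True)
    (fun a b => |f a| + 1 ≤ |f b|) fun s _ => by
      obtain ⟨M, hM⟩ := (s.image fun a => |f a|).exists_le
      obtain ⟨y, hy⟩ : ∃ y, M + 1 < |f y| := by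
        by_contra! h
        exact hf ⟨M + 1, h⟩
      exact ⟨y, trivial, fun a ha => by linarith [hM _ (Finset.mem_image_of_mem _ ha)]⟩
  exact ⟨x, hx⟩

theorem exists_continuous_comp_eq_indicator {α ι : Type*} [PseudoMetricSpace α] {t : ι → α}
    (ht : Pairwise fun i j => 1 ≤ dist (t i) (t j)) (A : Set ι) :
    ∃ φ : C(α, ℝ), ∀ i, φ (t i) = A.indicator 1 i := by
  rcases A.eq_empty_or_nonempty with rfl | hA
  · exact ⟨0, by simp⟩
  refine ⟨⟨fun a => max 0 (1 - Metric.infDist a (t '' A)),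
    continuous_const.max (continuous_const.sub (Metric.continuous_infDist_pt _))⟩, fun i => ?_⟩
  by_cases hi : i ∈ A
  · simp [hi, Metric.infDist_zero_of_mem (Set.mem_image_of_mem t hi)]
  · have : 1 ≤ Metric.infDist (t i) (t '' A) := (Metric.le_infDist (hA.image t)).2 <|
      Set.forall_mem_image.2 fun j hj => ht fun hij => hi (hij ▸ hj)
    simp [hi, this]

noncomputable def lowerCut (F : Finset ℚ) (r : ℝ) : Finset ℚ := F.filter fun q => (q : ℝ) < r

theorem exists_strictMonoOn_lowerCut (T : Finset ℝ) :
    ∃ F : Finset ℚ, StrictMonoOn (lowerCut F) T := by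
  choose g hg using fun p : ℝ × ℝ => show ∃ q : ℚ, p.1 < p.2 → p.1 < q ∧ (q : ℝ) < p.2 from
    if h : p.1 < p.2 then (exists_rat_btwn h).imp fun _ hq _ => hq else ⟨0, fun h' => absurd h' h⟩
  refine ⟨(T ×ˢ T).image g, fun r hr r' hr' hlt => ?_⟩
  have hgF : g (r, r') ∈ (T ×ˢ T).image g :=
    Finset.mem_image_of_mem g (Finset.mem_product.2 ⟨hr, hr'⟩)
  refine Finset.ssubset_iff_of_subset (Finset.monotone_filter_right _ fun _ _ hq => hq.trans hlt)
    |>.2 ⟨g (r, r'), ?_, ?_⟩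
  · exact Finset.mem_filter.2 ⟨hgF, (hg (r, r') hlt).2⟩
  · simp only [Finset.mem_filter, not_and, not_lt]
    exact fun _ => (hg (r, r') hlt).1.le

def cutSet (r : ℝ) : Set (Finset ℚ × Finset (Finset ℚ)) := {d | lowerCut d.1 r ∈ d.2}

theorem exists_forall_mem_cutSet_iff (S : Set ℝ) (T : Finset ℝ) :
    ∃ d, ∀ r ∈ T, d ∈ cutSet r ↔ r ∈ S := by
  classical
  obtain ⟨F, hF⟩ := exists_strictMonoOn_lowerCut T
  refine ⟨(F, (T.filter (· ∈ S)).image (lowerCut F)), fun r hr => ?_⟩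
  simp only [cutSet, Set.mem_ofPred_eq, Finset.mem_image, Finset.mem_filter]
  constructor
  · rintro ⟨r', ⟨hr', hr'S⟩, h⟩
    rwa [← hF.injOn hr' hr h]
  · exact fun hrS => ⟨r, ⟨hr, hrS⟩, rfl⟩

theorem exists_ultrafilter_le_mem_iff {α ι : Type*} (l : Filter α) (A : ι → Set α) (S : Set ι)
    (h : ∀ T : Finset ι, ∀ s ∈ l, ∃ a ∈ s, ∀ i ∈ T, a ∈ A i ↔ i ∈ S) :
    ∃ u : Ultrafilter α, ↑u ≤ l ∧ ∀ i, A i ∈ u ↔ i ∈ S := by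
  classical
  let B : ι → Set α := fun i => {a | a ∈ A i ↔ i ∈ S}
  let F : Finset ι → Filter α := fun T => l ⊓ 𝓟 (⋂ i ∈ T, B i)
  have hF : Directed (· ≥ ·) F := fun T₁ T₂ => ⟨T₁ ∪ T₂,
    inf_le_inf_left _ <| principal_mono.2 <|
      Set.biInter_subset_biInter_left Finset.subset_union_left,
    inf_le_inf_left _ <| principal_mono.2 <|
      Set.biInter_subset_biInter_left Finset.subset_union_right⟩
  have : (⨅ T, F T).NeBot := iInf_neBot_of_directed' hF fun T =>
    inf_principal_neBot_iff.2 fun s hs => (h T s hs).imp fun _ ha => ⟨ha.1, Set.mem_iInter₂.2 ha.2⟩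
  obtain ⟨u, hu⟩ := Ultrafilter.exists_le (⨅ T, F T)
  refine ⟨u, hu.trans (iInf_le_of_le ∅ inf_le_left), fun i => ?_⟩
  have hB : B i ∈ u := hu.trans (iInf_le_of_le {i} inf_le_right) (by simp)
  by_cases hi : i ∈ S
  · simpa [B, hi] using hB
  · have hBi : B i = (A i)ᶜ := by ext; simp [B, hi]
    simpa [hi] using Ultrafilter.compl_mem_iff_notMem.1 (hBi ▸ hB)

theorem exists_injective_ultrafilter_le_cofinite :
    ∃ U : Set ℝ → Ultrafilter ℕ, Function.Injective U ∧ ∀ S, (U S : Filter ℕ) ≤ cofinite := by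
  let D := Finset ℚ × Finset (Finset ℚ)
  obtain ⟨_⟩ := nonempty_denumerable (D × ℕ)
  let e : D × ℕ ≃ ℕ := Denumerable.eqv _
  -- the product with `ℕ` makes every nonempty Boolean combination of the `cutSet r` infinite
  have key (S : Set ℝ) := exists_ultrafilter_le_mem_iff cofinite
    (fun r => {n | (e.symm n).1 ∈ cutSet r}) S fun T s hs => by
      obtain ⟨d, hd⟩ := exists_forall_mem_cutSet_iff S T
      have hinf : (Set.range fun k => e (d, k)).Infinite :=
        Set.infinite_range_of_injective (e.injective.comp (Prod.mk_right_injective d))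
      obtain ⟨_, ⟨k, rfl⟩, hk⟩ := (hinf.sdiff (mem_cofinite.1 hs)).nonempty
      exact ⟨e (d, k), not_not.1 hk, by simpa using hd⟩
  choose U hUcof hUmem using key
  exact ⟨U, fun S S' h => Set.ext fun r => by rw [← hUmem S r, ← hUmem S' r, h], hUcof⟩

theorem exists_seq_tendsto_abs_indicator {f : C(X, ℝ)} (hf : ¬ ∃ M : ℝ, ∀ x, |f x| ≤ M) :
    ∃ x : ℕ → X, Tendsto (fun n => |f (x n)|) cofinite atTop ∧
      ∀ A : Set ℕ, ∃ h : C(X, ℝ), ∀ n, h (x n) = A.indicator 1 n := by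
  obtain ⟨x, hx⟩ := exists_seq_abs_add_one_le (f := ⇑f) hf
  have hn (n : ℕ) : (n : ℝ) ≤ |f (x n)| := by
    induction n with
    | zero => simp
    | succ n ih => push_cast; linarith [hx n (n + 1) n.lt_succ_self]
  have hsep : Pairwise fun m n => 1 ≤ dist |f (x m)| |f (x n)| := fun m n hmn => by
    change 1 ≤ dist _ _
    rw [Real.dist_eq]
    rcases hmn.lt_or_gt with h | h
    · exact le_abs.2 (Or.inr (by linarith [hx m n h]))
    · exact le_abs.2 (Or.inl (by linarith [hx n m h]))
  refine ⟨x, ?_, fun A => ?_⟩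
  · rw [Nat.cofinite_eq_atTop]
    exact tendsto_atTop_mono hn tendsto_natCast_atTop_atTop
  · obtain ⟨φ, hφ⟩ := exists_continuous_comp_eq_indicator hsep A
    exact ⟨φ.comp ⟨fun z => |f z|, f.continuous.abs⟩, hφ⟩

theorem fstar_eq_of_eventually_eq {ι : Type*} {l : Filter ι} [l.NeBot] {y : ι → X}
    {q : StoneCech X} (hy : Tendsto (stoneCechUnit ∘ y) l (𝓝 q)) {f : C(X, ℝ)} {c : ℝ}
    (hf : ∀ᶠ i in l, f (y i) = c) : fstar f q = c :=
  tendsto_nhds_unique (tendsto_fstar_of_tendsto hy f) <|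
    tendsto_const_nhds.congr' (hf.mono fun _ hi => congrArg _ hi.symm)

theorem notMem_upsilon_of_tendsto_abs {ι : Type*} {l : Filter ι} [l.NeBot] {y : ι → X}
    {q : StoneCech X} (hy : Tendsto (stoneCechUnit ∘ y) l (𝓝 q)) {f : C(X, ℝ)}
    (hf : Tendsto (fun i => |f (y i)|) l atTop) : q ∉ upsilon X := by
  intro hq
  obtain ⟨r, hr⟩ := hq f
  have hcob : Tendsto (fun i => f (y i)) l (Bornology.cobounded ℝ) :=
    tendsto_norm_atTop_iff_cobounded.1 hf
  rw [Metric.cobounded_eq_cocompact, ← coclosedCompact_eq_cocompact] at hcob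
  have hinf := tendsto_nhds_unique (tendsto_fstar_of_tendsto hy f)
    (OnePoint.tendsto_coe_infty.comp hcob)
  exact OnePoint.coe_ne_infty r (hr ▸ hinf)

theorem injective_ultrafilter_extend {ι : Type*} {y : ι → X}
    (hy : ∀ A : Set ι, ∃ h : C(X, ℝ), ∀ i, h (y i) = A.indicator 1 i) :
    Function.Injective (Ultrafilter.extend (stoneCechUnit ∘ y)) := by
  intro u v huv
  by_contra hne
  have : ¬ (v : Filter ι) ≤ u := fun h => hne (Ultrafilter.eq_of_le h).symm
  obtain ⟨A, hAu, hAv⟩ : ∃ A ∈ u, A ∉ v := by simpa [Filter.le_def] using this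
  obtain ⟨h, hh⟩ := hy A
  have h1 : fstar h (Ultrafilter.extend (stoneCechUnit ∘ y) u) = (1 : ℝ) :=
    fstar_eq_of_eventually_eq (ultrafilter_extend_eq_iff.1 rfl) <|
      Filter.mem_of_superset hAu fun i hi => by simp [hh, hi]
  have h0 : fstar h (Ultrafilter.extend (stoneCechUnit ∘ y) v) = (0 : ℝ) :=
    fstar_eq_of_eventually_eq (ultrafilter_extend_eq_iff.1 rfl) <|
      Filter.mem_of_superset (Ultrafilter.compl_mem_iff_notMem.2 hAv) fun i (hi : i ∉ A) => by
        simp [hh, hi]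
  rw [huv, h0] at h1
  exact zero_ne_one (OnePoint.coe_injective h1)

theorem exists_injective_notMem_upsilon (hX : ∃ f : C(X, ℝ), ¬ ∃ M : ℝ, ∀ x : X, |f x| ≤ M) :
    ∃ j : Set ℝ → StoneCech X, Function.Injective j ∧ ∀ S, j S ∉ upsilon X := by
  obtain ⟨f, hf⟩ := hX
  obtain ⟨x, hfx, hx⟩ := exists_seq_tendsto_abs_indicator hf
  obtain ⟨U, hUinj, hUcof⟩ := exists_injective_ultrafilter_le_cofinite
  refine ⟨Ultrafilter.extend (stoneCechUnit ∘ x) ∘ U, (injective_ultrafilter_extend hx).comp hUinj,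
    fun S => notMem_upsilon_of_tendsto_abs (f := f) (ultrafilter_extend_eq_iff.1 rfl) ?_⟩
  exact hfx.mono_left (hUcof S)

theorem statement4_general
    (hX : ∃ f : C(X, ℝ), ¬ ∃ M : ℝ, ∀ x : X, |f x| ≤ M) :
    Set.InjOn (fun p : StoneCech X => Cp p) ((upsilon X)ᶜ) ∧
    2 ^ Cardinal.continuum ≤ Cardinal.mk ((upsilon X)ᶜ : Set (StoneCech X)) ∧
    2 ^ Cardinal.continuum ≤ Cardinal.mk
      {S : Set C(X, ℝ) | (∃ R : Subring C(X, ℝ), (R : Set C(X, ℝ)) = S) ∧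
        ∀ f : C(X, ℝ), (∃ M : ℝ, ∀ x : X, |f x| ≤ M) → f ∈ S} := by
  obtain ⟨j, hj, hjX⟩ := exists_injective_notMem_upsilon hX
  have hcard : 2 ^ Cardinal.continuum ≤ Cardinal.mk ((upsilon X)ᶜ : Set (StoneCech X)) := by
    simpa only [Cardinal.mk_set, Cardinal.mk_real, Cardinal.lift_two_power, Cardinal.lift_continuum,
      Cardinal.lift_uzero] using Cardinal.lift_mk_le_lift_mk_of_injective
      (f := fun S => (⟨j S, hjX S⟩ : ((upsilon X)ᶜ : Set (StoneCech X))))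
      fun S S' h => hj (congrArg Subtype.val h)
  refine ⟨injOn_Cp, hcard, hcard.trans <| Cardinal.mk_le_of_injective
    (f := fun p => ⟨Cp p.1, ⟨subringCp p.1, rfl⟩,
      fun _ ⟨_, hM⟩ => mem_Cp_of_eventually_abs_le (.of_forall hM)⟩) ?_⟩
  exact fun p q h => Subtype.ext (injOn_Cp p.2 q.2 (congrArg Subtype.val h))

/-- If `X` is a completely regular Hausdorff space which is not pseudocompact
(`C*(X) ⊊ C(X)`), then the map `p ↦ C_p` is injective on `βX \ υX`, the latter set has
cardinality at least `2^𝔠`, and the family `Σ(X)` of intermediate rings between `C*(X)` and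
`C(X)` has at least `2^𝔠` distinct members. -/
theorem statement4 [T2Space X] [CompletelyRegularSpace X]
    (hX : ∃ f : C(X, ℝ), ¬ ∃ M : ℝ, ∀ x : X, |f x| ≤ M) :
    Set.InjOn (fun p : StoneCech X => Cp p) ((upsilon X)ᶜ) ∧
    2 ^ Cardinal.continuum ≤ Cardinal.mk ((upsilon X)ᶜ : Set (StoneCech X)) ∧
    2 ^ Cardinal.continuum ≤ Cardinal.mk
      {S : Set C(X, ℝ) | (∃ R : Subring C(X, ℝ), (R : Set C(X, ℝ)) = S) ∧
        ∀ f : C(X, ℝ), (∃ M : ℝ, ∀ x : X, |f x| ≤ M) → f ∈ S} :=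
  statement4_general hX
end
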